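/- arXiv:math/0607394 — 4 statements merged into one kernel-verified Lean document; each statement's English description precedes it below -/
import Mathlib

section
/- The right orthogonal of U in T equals the right orthogonal of T_{≤0}: an object Y of T satisfies Hom_T(U', Y) = 0 for all U' ∈ U if and only if Hom_T(Z, Y) = 0 for all Z ∈ T_{≤0}. Consequently, for every compact object X of T, the truncation triangle X_U → X → X^{U⊥} → S X_U of X with respect to the left aisle U in T_c is also a truncation triangle with respect to T_{≤0}, i.e. X_U ∈ T_{≤0} and X^{U⊥} ∈ (T_{≤0})^⊥; so the t-structure associated with T_{≤0} extends, from T_c to T, the t-structure associated with U. (Proposition A.1(a), extension part.) -/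
/-!
Setting: `T` is a compactly generated triangulated category with suspension
functor `S = ⟦1⟧` admitting arbitrary (small) coproducts, `U ⊆ T_c` is a left
aisle in the full subcategory `T_c` of compact objects, and `T_{≤0}` is the
smallest strictly full subcategory of `T` containing `U` and stable under
arbitrary coproducts and under extensions.
-/

namespace CYPaper

open CategoryTheory CategoryTheory.Limits CategoryTheory.Pretriangulated

universe v u

variable (T : Type u) [Category.{v} T] [HasZeroObject T] [Preadditive T]
  [HasShift T ℤ] [∀ n : ℤ, (shiftFunctor T n).Additive]
  [Pretriangulated T] [HasCoproducts.{v} T]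

instance : HasColimitsOfShape (Discrete ℕ) T :=
  hasColimitsOfShape_of_equivalence (Discrete.equivalence Equiv.ulift.{v, 0})

/-- An object `C` is compact if `Hom(C, −)` (as an additive functor) commutes with
arbitrary (small) coproducts. -/
def IsCompactObj (C : T) : Prop :=
  ∀ I : Type v,
    PreservesColimitsOfShape (Discrete I) (preadditiveCoyoneda.obj (Opposite.op C))

/-- The class of compact objects, i.e. the full triangulated subcategory `T_c`. -/
def Compacts : Set T := {C | IsCompactObj T C}

/-- `T` is compactly generated: there is a set `G` of compact objects such that an
object `X` is zero whenever `Hom(S^n G, X) = 0` for all `G ∈ G` and all `n : ℤ`. -/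
def CompactlyGenerated : Prop :=
  ∃ G : Set T, Small.{v} ↥G ∧ (∀ C ∈ G, IsCompactObj T C) ∧
    ∀ X : T, (∀ C ∈ G, ∀ n : ℤ, ∀ f : C⟦n⟧ ⟶ X, f = 0) → IsZero X

/-- A left aisle in the (strictly) full subcategory of `T` with class of objects `A`:
a strictly full additive subcategory stable under the suspension and under
extensions, whose inclusion admits a right adjoint (expressed by the existence of
coreflections). -/
structure LeftAisle (A : Set T) where
  carrier : Set T
  subset : carrier ⊆ A
  iso_closed : ∀ {X Y : T}, (X ≅ Y) → Y ∈ A → X ∈ carrier → Y ∈ carrier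
  zero_mem : ∀ X : T, IsZero X → X ∈ A → X ∈ carrier
  sum_mem : ∀ {X Y : T}, X ∈ carrier → Y ∈ carrier →
    ∀ c : BinaryCofan X Y, Nonempty (IsColimit c) → c.pt ∈ A → c.pt ∈ carrier
  shift_mem : ∀ X ∈ carrier, X⟦(1 : ℤ)⟧ ∈ carrier
  ext_mem : ∀ Tr : Triangle T, Tr ∈ (distTriang T) →
    Tr.obj₁ ∈ carrier → Tr.obj₃ ∈ carrier → Tr.obj₂ ∈ A → Tr.obj₂ ∈ carrier
  coreflect : ∀ X ∈ A, ∃ (U₀ : T) (_ : U₀ ∈ carrier) (ε : U₀ ⟶ X),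
    ∀ R ∈ carrier, Function.Bijective fun g : R ⟶ U₀ => g ≫ ε

/-- The smallest strictly full subcategory of `T` containing `U` and stable under
arbitrary (small) coproducts and under extensions. -/
inductive aisleGen (U : Set T) : T → Prop
  | of (X : T) (hX : X ∈ U) : aisleGen U X
  | iso (X Y : T) (e : X ≅ Y) (hX : aisleGen U X) : aisleGen U Y
  | coprod {I : Type v} (Y : I → T) (hY : ∀ i, aisleGen U (Y i)) : aisleGen U (∐ Y)
  | ext (Tr : Triangle T) (hT : Tr ∈ (distTriang T))
      (h₁ : aisleGen U Tr.obj₁) (h₃ : aisleGen U Tr.obj₃) : aisleGen U Tr.obj₂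

/-- `T_{≤0}`. -/
def TLe0 (U : Set T) : Set T := {X | aisleGen T U X}

/-- `T_{≤n} := S^{−n} T_{≤0}`. -/
def TLe (U : Set T) (n : ℤ) : Set T := {X | X⟦n⟧ ∈ TLe0 T U}

/-- `T_{>n} := (T_{≤n})^⊥`. -/
def TGt (U : Set T) (n : ℤ) : Set T := {Y | ∀ Z ∈ TLe T U n, ∀ f : Z ⟶ Y, f = 0}

/-- A truncation triangle `τ_{≤n} X → X → τ_{>n} X → S (τ_{≤n} X)` of `X` with
respect to the left aisle `T_{≤n}` on `T`. -/
structure TruncTriangle (U : Set T) (n : ℤ) (X : T) where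
  low : T
  high : T
  ι : low ⟶ X
  π : X ⟶ high
  δ : high ⟶ low⟦(1 : ℤ)⟧
  low_mem : low ∈ TLe T U n
  high_mem : high ∈ TGt T U n
  dist : Triangle.mk ι π δ ∈ (distTriang T)

/-- Data computing `H^n X = τ_{≥n} τ_{≤n} X = τ_{>n−1} τ_{≤n} X`: a truncation
triangle `t` of `X` at level `n` together with a truncation triangle `s` of
`τ_{≤n} X = t.low` at level `n − 1`; then `H^n X = s.high`. -/
structure HomologyData (U : Set T) (n : ℤ) (X : T) where
  t : TruncTriangle T U n X
  s : TruncTriangle T U (n - 1) t.low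

/-- The morphism `H^n f : H^n X ⟶ H^n Y` induced by `f : X ⟶ Y` on the homology
objects, encoded by its defining compatibilities. -/
structure HomologyMapData (U : Set T) (n : ℤ) {X Y : T} (f : X ⟶ Y)
    (dX : HomologyData T U n X) (dY : HomologyData T U n Y) where
  g : dX.t.low ⟶ dY.t.low
  hg : g ≫ dY.t.ι = dX.t.ι ≫ f
  h : dX.s.high ⟶ dY.s.high
  hh : dX.s.π ≫ h = g ≫ dY.s.π

/-- A truncation triangle at level `n`, with respect to the left aisle `U`, inside
the subcategory `T_c` of compact objects. -/
structure CTruncTriangle (U : Set T) (n : ℤ) (X : T) where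
  low : T
  high : T
  ι : low ⟶ X
  π : X ⟶ high
  δ : high ⟶ low⟦(1 : ℤ)⟧
  low_mem : low⟦n⟧ ∈ U
  high_compact : IsCompactObj T high
  high_orth : ∀ Z : T, Z⟦n⟧ ∈ U → ∀ f : Z ⟶ high, f = 0
  dist : Triangle.mk ι π δ ∈ (distTriang T)

/-- Data computing the homology `H^n X` with respect to the aisle `U` in `T_c`. -/
structure CHomologyData (U : Set T) (n : ℤ) (X : T) where
  t : CTruncTriangle T U n X
  s : CTruncTriangle T U (n - 1) t.low

/-- The morphism induced by `f` on `U`-homology objects in `T_c`. -/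
structure CHomologyMapData (U : Set T) (n : ℤ) {X Y : T} (f : X ⟶ Y)
    (dX : CHomologyData T U n X) (dY : CHomologyData T U n Y) where
  g : dX.t.low ⟶ dY.t.low
  hg : g ≫ dY.t.ι = dX.t.ι ≫ f
  h : dX.s.high ⟶ dY.s.high
  hh : dX.s.π ≫ h = g ≫ dY.s.π

/-- The left aisle `U ⊆ T_c` is non-degenerate: a morphism `f` of `T_c` is
invertible if and only if `H^p(f)` is invertible for all `p : ℤ`. -/
def UNondegenerate (U : Set T) : Prop :=
  ∀ ⦃X Y : T⦄, IsCompactObj T X → IsCompactObj T Y → ∀ f : X ⟶ Y,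
    (IsIso f ↔ ∀ (p : ℤ) (dX : CHomologyData T U p X) (dY : CHomologyData T U p Y)
      (m : CHomologyMapData T U p f dX dY), IsIso m.h)

/-- Condition (†): for each compact `X` there is an integer `N` such that
`Hom(X, S^N U') = 0` for every `U' ∈ U`. -/
def CondDagger (U : Set T) : Prop :=
  ∀ X : T, IsCompactObj T X → ∃ N : ℤ, ∀ U' ∈ U, ∀ f : X ⟶ U'⟦N⟧, f = 0

/-- Proposition A.1(a), extension part: the right orthogonal of `U` in `T` equals
the right orthogonal of `T_{≤0}`; consequently, for every compact object `X`, a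
truncation triangle of `X` with respect to the left aisle `U` in `T_c` is also a
truncation triangle with respect to `T_{≤0}`. -/
theorem stmt2 (hT : CompactlyGenerated T) (U : LeftAisle T (Compacts T)) :
    (∀ Y : T, (∀ U' ∈ U.carrier, ∀ f : U' ⟶ Y, f = 0) ↔
      (∀ Z ∈ TLe0 T U.carrier, ∀ f : Z ⟶ Y, f = 0)) ∧
    (∀ X Xu Xo : T, IsCompactObj T X → IsCompactObj T Xo → Xu ∈ U.carrier →
      (∀ U' ∈ U.carrier, ∀ f : U' ⟶ Xo, f = 0) →
      ∀ (a : Xu ⟶ X) (b : X ⟶ Xo) (c : Xo ⟶ Xu⟦(1 : ℤ)⟧),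
        Triangle.mk a b c ∈ (distTriang T) →
        Xu ∈ TLe0 T U.carrier ∧ ∀ Z ∈ TLe0 T U.carrier, ∀ f : Z ⟶ Xo, f = 0) := by

  have key : ∀ Y : T, (∀ U' ∈ U.carrier, ∀ f : U' ⟶ Y, f = 0) →
      (∀ Z ∈ TLe0 T U.carrier, ∀ f : Z ⟶ Y, f = 0) := by
    intro Y hY Z hZ
    induction hZ with
    | of X hX => exact hY X hX
    | iso X Z e hX ih =>
      intro f
      have := ih (e.hom ≫ f)
      have : e.inv ≫ e.hom ≫ f = e.inv ≫ 0 := by rw [this]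
      simpa using this
    | coprod Ys hYs ih =>
      intro f
      apply Sigma.hom_ext
      intro i
      simpa using ih i (Sigma.ι Ys i ≫ f)
    | ext Tr hTr h₁ h₃ ih₁ ih₃ =>
      intro f
      obtain ⟨g, hg⟩ := Triangle.yoneda_exact₂ Tr hTr f (ih₁ (Tr.mor₁ ≫ f))
      rw [hg, ih₃ g, comp_zero]
  constructor
  · intro Y
    refine ⟨key Y, fun h U' hU' f => h U' (aisleGen.of U' hU') f⟩
  · intro X Xu Xo _ _ hXu hXo a b c _
    exact ⟨aisleGen.of Xu hXu, key Xo hXo⟩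


end CYPaper
end

section
/- Every left aisle V on T containing U contains T_{≤0}; thus T_{≤0} is the smallest left aisle on T containing U. In particular, any left aisle on a triangulated category with arbitrary coproducts is stable under arbitrary coproducts (since its inclusion functor admits a right adjoint and hence preserves coproducts). (Proposition A.1(a), minimality part.) -/
/-!
Setting: `T` is a compactly generated triangulated category with suspension
functor `S = ⟦1⟧` admitting arbitrary (small) coproducts, `U ⊆ T_c` is a left
aisle in the full subcategory `T_c` of compact objects, and `T_{≤0}` is the
smallest strictly full subcategory of `T` containing `U` and stable under
arbitrary coproducts and under extensions.
-/

namespace CYPaper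

open CategoryTheory CategoryTheory.Limits CategoryTheory.Pretriangulated

universe v u

variable (T : Type u) [Category.{v} T] [HasZeroObject T] [Preadditive T]
  [HasShift T ℤ] [∀ n : ℤ, (shiftFunctor T n).Additive]
  [Pretriangulated T] [HasCoproducts.{v} T]

/-- Proposition A.1(a), minimality part: every left aisle `V` on `T` containing `U`
contains `T_{≤0}`; in particular, any left aisle on `T` is stable under arbitrary
coproducts. -/
theorem stmt3 (hT : CompactlyGenerated T) (U : LeftAisle T (Compacts T)) :
    (∀ V : LeftAisle T Set.univ, U.carrier ⊆ V.carrier → TLe0 T U.carrier ⊆ V.carrier) ∧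
    (∀ (V : LeftAisle T Set.univ) (I : Type v) (Y : I → T),
      (∀ i, Y i ∈ V.carrier) → (∐ Y) ∈ V.carrier) := by
  have hco : ∀ (V : LeftAisle T Set.univ) (I : Type v) (Y : I → T),
      (∀ i, Y i ∈ V.carrier) → (∐ Y) ∈ V.carrier := by
    intro V I Y hY
    obtain ⟨U₀, hU₀, ε, hε⟩ := V.coreflect (∐ Y) (Set.mem_univ _)
    have hlift : ∀ i, ∃ g : Y i ⟶ U₀, g ≫ ε = Sigma.ι Y i :=
      fun i => (hε _ (hY i)).2 (Sigma.ι Y i)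
    choose g hg using hlift
    have hsε : Sigma.desc g ≫ ε = 𝟙 (∐ Y) := by
      ext i
      simp [hg]
    have hεs : ε ≫ Sigma.desc g = 𝟙 U₀ := by
      have key : (fun h : U₀ ⟶ U₀ => h ≫ ε) (ε ≫ Sigma.desc g) =
          (fun h : U₀ ⟶ U₀ => h ≫ ε) (𝟙 U₀) := by
        simp [Category.assoc, hsε]
      exact (hε U₀ hU₀).1 key
    haveI : IsIso ε := ⟨Sigma.desc g, hεs, hsε⟩
    exact V.iso_closed (asIso ε) (Set.mem_univ _) hU₀
  refine ⟨?_, hco⟩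
  intro V hUV X hX
  induction hX with
  | of X hX => exact hUV hX
  | iso X Y e hX ih => exact V.iso_closed e (Set.mem_univ _) ih
  | coprod Y hY ih => exact hco V _ Y ih
  | ext Tr hTr h1 h3 ih1 ih3 => exact V.ext_mem Tr hTr ih1 ih3 (Set.mem_univ _)

end CYPaper
end

section
/- For every n ∈ ℤ and every family (Y_p)_{p∈I} of objects of T, the canonical morphism ⊕_{p∈I} τ_{≤n} Y_p → τ_{≤n}(⊕_{p∈I} Y_p) is an isomorphism; that is, the truncation functors τ_{≤n} associated with the extended aisle T_{≤0} commute with arbitrary coproducts. (Key step of Lemma A.2.) -/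
/-!
Setting: `T` is a compactly generated triangulated category with suspension
functor `S = ⟦1⟧` admitting arbitrary (small) coproducts, `U ⊆ T_c` is a left
aisle in the full subcategory `T_c` of compact objects, and `T_{≤0}` is the
smallest strictly full subcategory of `T` containing `U` and stable under
arbitrary coproducts and under extensions.
-/

namespace CYPaper

open CategoryTheory CategoryTheory.Limits CategoryTheory.Pretriangulated

universe v u

variable (T : Type u) [Category.{v} T] [HasZeroObject T] [Preadditive T]
  [HasShift T ℤ] [∀ n : ℤ, (shiftFunctor T n).Additive]
  [Pretriangulated T] [HasCoproducts.{v} T]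

/-!
The coproduct of the truncation triangles `τ_{≤n} Y_p → Y_p → τ_{>n} Y_p →` is again
distinguished (a five-lemma argument against a cone of `⊕ τ_{≤n} Y_p → ⊕ Y_p`, using that
`Hom(⊕_p −, A) = ∏_p Hom(−, A)`). Its first vertex lies in `T_{≤n}`, which is closed under
coproducts by construction. Its third vertex lies in `T_{>n}`: right orthogonality to `T_{≤n}`
only has to be tested on the generators `S^{-n} U'` with `U' ∈ U`, and these are compact, so
`Hom(U', S^n (⊕_p τ_{>n} Y_p)) = ⊕_p Hom(U', S^n τ_{>n} Y_p) = 0`. So it is a truncation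
triangle of `⊕_p Y_p`, and the first vertex of a truncation triangle is unique up to a unique
isomorphism compatible with the maps to `⊕_p Y_p`.
-/

section CoproductTriangle

variable {C : Type*} [Category C] [HasShift C ℤ]

section ShiftCoproduct

variable {J : Type*} (X : J → C) [HasCoproduct X] (n : ℤ)

noncomputable def isColimitShiftCofan :
    IsColimit (Cofan.mk ((∐ X)⟦n⟧) fun j => (Sigma.ι X j)⟦n⟧') :=
  isColimitCofanMkObjOfIsColimit (shiftFunctor C n) _ _ (coproductIsCoproduct X)

noncomputable def shiftSigmaDesc {A : C} (g : ∀ j, (X j)⟦n⟧ ⟶ A) : (∐ X)⟦n⟧ ⟶ A :=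
  Cofan.IsColimit.desc (isColimitShiftCofan X n) g

@[simp]
lemma shift_ι_comp_shiftSigmaDesc {A : C} (g : ∀ j, (X j)⟦n⟧ ⟶ A) (j : J) :
    (Sigma.ι X j)⟦n⟧' ≫ shiftSigmaDesc X n g = g j :=
  Cofan.IsColimit.fac (isColimitShiftCofan X n) g j

lemma shiftSigma_hom_ext {A : C} {f g : (∐ X)⟦n⟧ ⟶ A}
    (h : ∀ j, (Sigma.ι X j)⟦n⟧' ≫ f = (Sigma.ι X j)⟦n⟧' ≫ g) : f = g :=
  Cofan.IsColimit.hom_ext (isColimitShiftCofan X n) _ _ h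

end ShiftCoproduct

variable [Preadditive C] [HasZeroObject C] [∀ n : ℤ, (shiftFunctor C n).Additive]
  [Pretriangulated C]

lemma _root_.CategoryTheory.Pretriangulated.Triangle.yoneda_exact₁ (T : Triangle C)
    (hT : T ∈ distTriang C) {X : C} (f : T.obj₁⟦(1 : ℤ)⟧ ⟶ X) (hf : T.mor₃ ≫ f = 0) :
    ∃ g : T.obj₂⟦(1 : ℤ)⟧ ⟶ X, f = T.mor₁⟦(1 : ℤ)⟧' ≫ g := by
  obtain ⟨g, hg⟩ : ∃ g : T.obj₂⟦(1 : ℤ)⟧ ⟶ X, f = (-T.mor₁⟦(1 : ℤ)⟧') ≫ g :=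
    T.rotate.yoneda_exact₃ (rot_of_distTriang _ hT) f hf
  exact ⟨-g, by rw [hg, Preadditive.neg_comp, Preadditive.comp_neg]⟩

variable {J : Type*} (Tri : J → Triangle C)
  [HasCoproduct fun j => (Tri j).obj₁] [HasCoproduct fun j => (Tri j).obj₂]
  [HasCoproduct fun j => (Tri j).obj₃]

noncomputable abbrev coproductTriangle : Triangle C where
  obj₁ := ∐ fun j => (Tri j).obj₁
  obj₂ := ∐ fun j => (Tri j).obj₂
  obj₃ := ∐ fun j => (Tri j).obj₃
  mor₁ := Limits.Sigma.map fun j => (Tri j).mor₁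
  mor₂ := Limits.Sigma.map fun j => (Tri j).mor₂
  mor₃ := Sigma.desc fun j =>
    (Tri j).mor₃ ≫ (Sigma.ι (fun j => (Tri j).obj₁) j)⟦(1 : ℤ)⟧'

@[simps]
noncomputable def coproductTriangle.desc {T' : Triangle C} (φ : ∀ j, Tri j ⟶ T') :
    coproductTriangle Tri ⟶ T' where
  hom₁ := Sigma.desc fun j => (φ j).hom₁
  hom₂ := Sigma.desc fun j => (φ j).hom₂
  hom₃ := Sigma.desc fun j => (φ j).hom₃
  comm₁ := Sigma.hom_ext _ _ fun j => by simp
  comm₂ := Sigma.hom_ext _ _ fun j => by simp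
  comm₃ := Sigma.hom_ext _ _ fun j => by simp [← Functor.map_comp]

variable {Tri} (hTri : ∀ j, Tri j ∈ distTriang C)
include hTri

lemma coproductTriangle.mor₁_comp_mor₂ :
    (coproductTriangle Tri).mor₁ ≫ (coproductTriangle Tri).mor₂ = 0 :=
  Sigma.hom_ext _ _ fun j => by simp [reassoc_of% comp_distTriang_mor_zero₁₂ _ (hTri j)]

lemma coproductTriangle.yoneda_exact₃ {A : C} (f : (coproductTriangle Tri).obj₃ ⟶ A)
    (hf : (coproductTriangle Tri).mor₂ ≫ f = 0) :
    ∃ g, f = (coproductTriangle Tri).mor₃ ≫ g := by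
  have (j : J) := (Tri j).yoneda_exact₃ (hTri j) (Sigma.ι (fun j => (Tri j).obj₃) j ≫ f)
    (by simpa using Sigma.ι (fun j => (Tri j).obj₂) j ≫= hf)
  choose g hg using this
  exact ⟨shiftSigmaDesc _ 1 g, Sigma.hom_ext _ _ fun j => by simp [hg j]⟩

lemma coproductTriangle.yoneda_exact₁ {A : C}
    (g : (coproductTriangle Tri).obj₁⟦(1 : ℤ)⟧ ⟶ A) (hg : (coproductTriangle Tri).mor₃ ≫ g = 0) :
    ∃ h, g = (coproductTriangle Tri).mor₁⟦(1 : ℤ)⟧' ≫ h := by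
  have (j : J) := (Tri j).yoneda_exact₁ (hTri j)
    ((Sigma.ι (fun j => (Tri j).obj₁) j)⟦(1 : ℤ)⟧' ≫ g)
    (by simpa using Sigma.ι (fun j => (Tri j).obj₃) j ≫= hg)
  choose h hh using this
  refine ⟨shiftSigmaDesc _ 1 h, shiftSigma_hom_ext _ 1 fun j => ?_⟩
  rw [hh j, ← Functor.map_comp_assoc, Sigma.ι_map, Functor.map_comp_assoc,
    shift_ι_comp_shiftSigmaDesc]

lemma coproductTriangle.epi_hom₃ {T' : Triangle C} (hT' : T' ∈ distTriang C)
    (ψ : coproductTriangle Tri ⟶ T') [IsIso ψ.hom₁] [IsIso ψ.hom₂] : Epi ψ.hom₃ := by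
  rw [Preadditive.epi_iff_cancel_zero]
  intro A f hf
  obtain ⟨g, rfl⟩ := T'.yoneda_exact₃ hT' f (by
    rw [← cancel_epi ψ.hom₂, ← ψ.comm₂_assoc, hf, comp_zero, comp_zero])
  obtain ⟨h, hh⟩ := coproductTriangle.yoneda_exact₁ hTri (ψ.hom₁⟦(1 : ℤ)⟧' ≫ g)
    (by rwa [ψ.comm₃_assoc])
  have hg : g = T'.mor₁⟦(1 : ℤ)⟧' ≫ (inv ψ.hom₂)⟦(1 : ℤ)⟧' ≫ h := by
    rw [← cancel_epi (ψ.hom₁⟦(1 : ℤ)⟧'), hh, ← Functor.map_comp_assoc,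
      ← Functor.map_comp_assoc, Category.assoc, ← ψ.comm₁_assoc, IsIso.hom_inv_id,
      Category.comp_id]
  rw [hg, comp_distTriang_mor_zero₃₁_assoc _ hT', zero_comp]

lemma coproductTriangle.isIso_hom₃ {T' : Triangle C} (hT' : T' ∈ distTriang C)
    (ψ : coproductTriangle Tri ⟶ T') [IsIso ψ.hom₁] [IsIso ψ.hom₂] : IsIso ψ.hom₃ := by
  have := coproductTriangle.epi_hom₃ hTri hT' ψ
  refine isIso_of_coyoneda_map_bijective _ fun A =>
    ⟨fun f₁ f₂ h => by simpa only [cancel_epi] using h, fun a => ?_⟩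
  obtain ⟨a', ha'⟩ := T'.yoneda_exact₂ hT'
    (inv ψ.hom₂ ≫ (coproductTriangle Tri).mor₂ ≫ a) (by
      rw [← cancel_epi ψ.hom₁, ← ψ.comm₁_assoc, IsIso.hom_inv_id_assoc,
        reassoc_of% (coproductTriangle.mor₁_comp_mor₂ hTri), zero_comp, comp_zero])
  obtain ⟨b, hb⟩ := coproductTriangle.yoneda_exact₃ hTri (a - ψ.hom₃ ≫ a') (by
    rw [Preadditive.comp_sub, ψ.comm₂_assoc, ← ha', IsIso.hom_inv_id_assoc, sub_self])
  refine ⟨a' + T'.mor₃ ≫ inv (ψ.hom₁⟦(1 : ℤ)⟧') ≫ b, ?_⟩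
  dsimp only
  rw [Preadditive.comp_add, ← ψ.comm₃_assoc, IsIso.hom_inv_id_assoc, ← hb, add_sub_cancel]

lemma coproductTriangle_distinguished : coproductTriangle Tri ∈ distTriang C := by
  obtain ⟨Z, f₂, f₃, hT'⟩ := distinguished_cocone_triangle (coproductTriangle Tri).mor₁
  -- `Triangle.mk` is not reducible, and `simp` below needs to see the vertices of the cone.
  replace hT' :
    (⟨_, _, Z, (coproductTriangle Tri).mor₁, f₂, f₃⟩ : Triangle C) ∈ distTriang C := hT'
  let ψ := coproductTriangle.desc Tri fun j =>
    completeDistinguishedTriangleMorphism (Tri j) _ (hTri j) hT'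
      (Sigma.ι (fun j => (Tri j).obj₁) j) (Sigma.ι (fun j => (Tri j).obj₂) j) (by simp)
  have : IsIso ψ.hom₁ := by
    rw [show ψ.hom₁ = 𝟙 _ from Sigma.hom_ext _ _ fun j => by simp [ψ]]
    infer_instance
  have : IsIso ψ.hom₂ := by
    rw [show ψ.hom₂ = 𝟙 _ from Sigma.hom_ext _ _ fun j => by simp [ψ]]
    infer_instance
  have := coproductTriangle.isIso_hom₃ hTri hT' ψ
  have : IsIso ψ := Triangle.isIso_of_isIsos ψ inferInstance inferInstance inferInstance
  exact isomorphic_distinguished _ hT' _ (asIso ψ)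

end CoproductTriangle

lemma isIso_of_comp_bijective {C : Type*} [Category C] (S : Set C) {A A' X : C}
    {f : A ⟶ X} {f' : A' ⟶ X} (hf : ∀ R ∈ S, Function.Bijective fun g : R ⟶ A => g ≫ f)
    (hf' : ∀ R ∈ S, Function.Bijective fun g : R ⟶ A' => g ≫ f') (hA : A ∈ S)
    (hA' : A' ∈ S) (φ : A ⟶ A') (hφ : φ ≫ f' = f) : IsIso φ := by
  obtain ⟨ψ, hψ⟩ := (hf A' hA').2 f'
  refine ⟨ψ, (hf A hA).1 ?_, (hf' A' hA').1 ?_⟩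
  · simp only [Category.assoc, hψ, hφ, Category.id_comp]
  · simp only [Category.assoc, hφ, hψ, Category.id_comp]

lemma IsCompactObj.eq_zero_of_isColimit {C : Type*} [Category.{v} C] [Preadditive C] {V : C}
    (hV : IsCompactObj C V) {I : Type v} {F : I → C}
    {c : Cofan F} (hc : IsColimit c) (h0 : ∀ j (g : V ⟶ F j), g = 0) (f : V ⟶ c.pt) :
    f = 0 := by
  have := hV I
  let G := preadditiveCoyoneda.obj (Opposite.op V)
  have hG : 𝟙 (G.obj c.pt) = 0 := (isColimitOfPreserves G hc).hom_ext fun ⟨j⟩ => by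
    ext g
    rw [h0 j g]
    exact (map_zero _).trans rfl
  exact congrArg (fun u => u.hom f) hG

variable {T}

lemma aisleGen_shift_one {U : Set T} (hU : ∀ X ∈ U, X⟦(1 : ℤ)⟧ ∈ U) {X : T}
    (h : aisleGen T U X) : aisleGen T U (X⟦(1 : ℤ)⟧) := by
  induction h with
  | of X hX => exact .of _ (hU X hX)
  | iso X Y e _ ih => exact .iso _ _ ((shiftFunctor T (1 : ℤ)).mapIso e) ih
  | coprod Y _ ih =>
    exact .iso _ _ (asIso (sigmaComparison (shiftFunctor T (1 : ℤ)) Y)) (.coprod _ ih)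
  | ext Tr hTr _ _ ih₁ ih₃ =>
    exact .ext _ (rot_of_distTriang _ (rot_of_distTriang _ (rot_of_distTriang _ hTr))) ih₁ ih₃

lemma eq_zero_of_aisleGen {U : Set T} {Z : T} (hZ : ∀ V ∈ U, ∀ g : V ⟶ Z, g = 0) {W : T}
    (hW : aisleGen T U W) (g : W ⟶ Z) : g = 0 := by
  induction hW with
  | of V hV => exact hZ V hV g
  | iso X Y e _ ih => rw [← cancel_epi e.hom, comp_zero]; exact ih _
  | coprod Y _ ih => exact Sigma.hom_ext _ _ fun j => by rw [comp_zero]; exact ih j _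
  | ext Tr hTr _ _ ih₁ ih₃ =>
    obtain ⟨g', rfl⟩ := Tr.yoneda_exact₂ hTr g (ih₁ _)
    rw [ih₃ g', comp_zero]

variable {U : Set T} {n : ℤ}

lemma shift_one_mem_TLe (hU : ∀ X ∈ U, X⟦(1 : ℤ)⟧ ∈ U) {X : T} (h : X ∈ TLe T U n) :
    X⟦(1 : ℤ)⟧ ∈ TLe T U n :=
  .iso _ _ (shiftComm X n 1) (aisleGen_shift_one hU h)

lemma mem_TGt_iff {Y : T} :
    Y ∈ TGt T U n ↔ ∀ W, aisleGen T U W → ∀ g : W ⟶ Y⟦n⟧, g = 0 := by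
  refine ⟨fun hY W hW g => ?_, fun h Z hZ f => ?_⟩
  · have hW' : W⟦-n⟧ ∈ TLe T U n :=
      .iso _ _ ((shiftFunctorCompIsoId T (-n) n (neg_add_cancel n)).symm.app W) hW
    have hg := hY _ hW' (g⟦-n⟧' ≫ (shiftFunctorCompIsoId T n (-n) (add_neg_cancel n)).hom.app Y)
    rwa [Preadditive.IsIso.comp_right_eq_zero, Functor.map_eq_zero_iff] at hg
  · exact (shiftFunctor T n).map_eq_zero_iff.mp (h _ hZ _)

lemma sigma_mem_TLe {I : Type v} (X : I → T) (hX : ∀ p, X p ∈ TLe T U n) :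
    ∐ X ∈ TLe T U n :=
  .iso _ _ (asIso (sigmaComparison (shiftFunctor T n) X)) (.coprod _ hX)

lemma sigma_mem_TGt (hU : U ⊆ Compacts T) {I : Type v} (X : I → T)
    (hX : ∀ p, X p ∈ TGt T U n) : ∐ X ∈ TGt T U n :=
  mem_TGt_iff.mpr fun _ => eq_zero_of_aisleGen fun V hV =>
    (hU hV).eq_zero_of_isColimit (isColimitShiftCofan X n) fun p =>
      mem_TGt_iff.mp (hX p) V (.of V hV)

lemma comp_mor₁_bijective (hU : ∀ X ∈ U, X⟦(1 : ℤ)⟧ ∈ U) {Tr : Triangle T}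
    (hTr : Tr ∈ distTriang T) (h₃ : Tr.obj₃ ∈ TGt T U n) {R : T} (hR : R ∈ TLe T U n) :
    Function.Bijective fun g : R ⟶ Tr.obj₁ => g ≫ Tr.mor₁ := by
  refine ⟨fun g₁ g₂ h => ?_, fun f => ?_⟩
  · obtain ⟨w, hw⟩ := Tr.coyoneda_exact₁ hTr ((g₁ - g₂)⟦(1 : ℤ)⟧') (by
      rw [← Functor.map_comp, Preadditive.sub_comp, sub_eq_zero.mpr h, Functor.map_zero])
    rw [h₃ _ (shift_one_mem_TLe hU hR) w, zero_comp, Functor.map_eq_zero_iff] at hw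
    exact sub_eq_zero.mp hw
  · obtain ⟨g, hg⟩ := Tr.coyoneda_exact₂ hTr f (h₃ R hR _)
    exact ⟨g, hg.symm⟩

theorem stmt5_general (U : LeftAisle T (Compacts T))
    (n : ℤ) (I : Type v) (Y : I → T)
    (d : ∀ p : I, TruncTriangle T U.carrier n (Y p))
    (e : TruncTriangle T U.carrier n (∐ Y))
    (φ : (∐ fun p => (d p).low) ⟶ e.low)
    (hφ : ∀ p : I, Sigma.ι (fun q => (d q).low) p ≫ φ ≫ e.ι = (d p).ι ≫ Sigma.ι Y p) :
    IsIso φ := by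
  let D := coproductTriangle fun p => Triangle.mk (d p).ι (d p).π (d p).δ
  have hD : D ∈ distTriang T := coproductTriangle_distinguished fun p => (d p).dist
  have hD₃ : D.obj₃ ∈ TGt T U.carrier n := sigma_mem_TGt U.subset _ fun p => (d p).high_mem
  have hφι : φ ≫ e.ι = Limits.Sigma.map fun p => (d p).ι :=
    Sigma.hom_ext _ _ fun p => by rw [hφ p, Sigma.ι_map]
  exact isIso_of_comp_bijective (TLe T U.carrier n)
    (fun R => comp_mor₁_bijective U.shift_mem hD hD₃)
    (fun R => comp_mor₁_bijective U.shift_mem e.dist e.high_mem)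
    (sigma_mem_TLe _ fun p => (d p).low_mem) e.low_mem φ hφι

/-- Key step of Lemma A.2: the truncation functors `τ_{≤n}` associated with the
extended aisle `T_{≤0}` commute with arbitrary coproducts: the canonical morphism
`⊕_p τ_{≤n} Y_p ⟶ τ_{≤n} (⊕_p Y_p)` (the unique morphism compatible with the
counits of the truncations) is an isomorphism. -/
theorem stmt5 (hT : CompactlyGenerated T) (U : LeftAisle T (Compacts T))
    (n : ℤ) (I : Type v) (Y : I → T)
    (d : ∀ p : I, TruncTriangle T U.carrier n (Y p))
    (e : TruncTriangle T U.carrier n (∐ Y))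
    (φ : (∐ fun p => (d p).low) ⟶ e.low)
    (hφ : ∀ p : I, Sigma.ι (fun q => (d q).low) p ≫ φ ≫ e.ι = (d p).ι ≫ Sigma.ι Y p) :
    IsIso φ :=
  stmt5_general U n I Y d e φ hφ

end CYPaper
end

section
/- For every object X of T and every n ∈ ℤ, the canonical morphism hocolim_i τ_{≤i} X → X induces an isomorphism H^n(hocolim_i τ_{≤i} X) ≅ H^n(X). (Main computation in the proof of Proposition A.3; it holds without any non-degeneracy assumption on U.) -/
/-!
Setting: `T` is a compactly generated triangulated category with suspension
functor `S = ⟦1⟧` admitting arbitrary (small) coproducts, `U ⊆ T_c` is a left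
aisle in the full subcategory `T_c` of compact objects, and `T_{≤0}` is the
smallest strictly full subcategory of `T` containing `U` and stable under
arbitrary coproducts and under extensions.
-/

namespace CYPaper

open CategoryTheory CategoryTheory.Limits CategoryTheory.Pretriangulated

universe v u

variable (T : Type u) [Category.{v} T] [HasZeroObject T] [Preadditive T]
  [HasShift T ℤ] [∀ n : ℤ, (shiftFunctor T n).Additive]
  [Pretriangulated T] [HasCoproducts.{v} T]

/-!
Complete `m : hocolim τ_{≤i} X ⟶ X` to a distinguished triangle `hocolim → X → Z → ⋯`.
It suffices that `Hom(W, m)` is bijective for every `W ∈ T_{≤n}`: then `m` induces an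
isomorphism `τ_{≤n} hocolim ≅ τ_{≤n} X`, hence on `H^n`.

A map from a compact object into `∐ τ_{≤i} X` only sees finitely many summands. Hence `1 - σ`
is injective on maps out of a compact `W`, so every map `W ⟶ hocolim` factors through some
`τ_{≤j} X` with `j` as large as we like; for `W ∈ T_{≤j}` the coreflection `τ_{≤j} X ⟶ X` then
makes `Hom(W, m)` bijective. This shows that `Z` receives no nonzero map from any shift of an
object of `U`. The objects with no nonzero map to any shift of `Z` are closed under coproducts,
extensions and shifts, so they contain every `T_{≤n}`, and there `Hom(W, m)` is bijective.
-/

section Compact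

variable {C : Type*} [Category.{v} C] [Preadditive C]

theorem IsCompactObj.preservesColimitsOfShape {W : C} (hW : IsCompactObj C W) (I : Type*)
    [Small.{v} I] :
    PreservesColimitsOfShape (Discrete I) (preadditiveCoyoneda.obj (Opposite.op W)) :=
  have := hW (Shrink.{v} I)
  preservesColimitsOfShape_of_equiv (Discrete.equivalence (equivShrink I).symm) _

variable [HasShift C ℤ] [∀ n : ℤ, (shiftFunctor C n).Additive]

noncomputable def shiftPreadditiveCoyonedaIso (W : C) (k : ℤ) :
    preadditiveCoyoneda.obj (Opposite.op (W⟦k⟧)) ≅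
      shiftFunctor C (-k) ⋙ preadditiveCoyoneda.obj (Opposite.op W) :=
  have : (shiftEquiv C k).functor.Additive := inferInstanceAs (shiftFunctor C k).Additive
  NatIso.ofComponents (fun A => ((shiftEquiv C k).toAdjunction.homAddEquiv W A).toAddCommGrpIso)
    (fun f => by
      ext g
      exact (shiftEquiv C k).toAdjunction.homEquiv_naturality_right g f)

theorem IsCompactObj.shift {W : C} (hW : IsCompactObj C W) (k : ℤ) : IsCompactObj C (W⟦k⟧) :=
  fun I =>
    have := hW I
    preservesColimitsOfShape_of_natIso (shiftPreadditiveCoyonedaIso W k).symm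

end Compact

section Coproducts

variable {C : Type*} [Category C] [Preadditive C]

theorem Sigma.eventually_sum_π_ι_eq {I : Type*} [DecidableEq I] {Y : I → C} [HasCoproduct Y]
    {W : C} [PreservesColimit (Discrete.functor Y) (preadditiveCoyoneda.obj (Opposite.op W))]
    (x : W ⟶ ∐ Y) :
    ∀ᶠ s in Filter.atTop, ∑ i ∈ s, (x ≫ Sigma.π Y i) ≫ Sigma.ι Y i = x := by
  -- The maps with this property form a subgroup containing every `g ≫ Sigma.ι Y j`. Since
  -- `Hom(W, -)` preserves the coproduct, the quotient map by this subgroup vanishes.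
  let Q : AddSubgroup (W ⟶ ∐ Y) :=
    { carrier := {y | ∀ᶠ s in Filter.atTop, ∑ i ∈ s, (y ≫ Sigma.π Y i) ≫ Sigma.ι Y i = y}
      zero_mem' := Filter.Eventually.of_forall fun s => by simp
      add_mem' := fun hx hy => (hx.and hy).mono fun s ⟨hxs, hys⟩ => by
        simp only [Preadditive.add_comp, Finset.sum_add_distrib, hxs, hys]
      neg_mem' := fun hx => hx.mono fun s hxs => by
        simp only [Preadditive.neg_comp, Finset.sum_neg_distrib, hxs] }
  have hι (j : I) (g : W ⟶ Y j) : g ≫ Sigma.ι Y j ∈ Q :=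
    (Filter.eventually_ge_atTop {j}).mono fun s hs => by
      rw [Finset.sum_eq_single_of_mem j (Finset.singleton_subset_iff.mp hs)]
      · simp
      · intro i _ hij
        simp [Sigma.ι_π_of_ne _ (Ne.symm hij)]
  have hc := isColimitOfPreserves (preadditiveCoyoneda.obj (Opposite.op W))
    (colimit.isColimit (Discrete.functor Y))
  have hquot : AddCommGrpCat.ofHom (QuotientAddGroup.mk' Q) = 0 := by
    refine hc.hom_ext fun ⟨j⟩ => ?_
    ext g
    exact (QuotientAddGroup.eq_zero_iff _).mpr (hι j g)
  exact (QuotientAddGroup.eq_zero_iff x).mp (congr($hquot x))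

end Coproducts

section Telescope

variable {C : Type*} [Category C] [Preadditive C] {Y : ℕ → C} [HasCoproduct Y]
  (σ : ∀ i, Y i ⟶ Y (i + 1))

/-- The map `1 - σ` on `∐ Y`, whose cone is the homotopy colimit of the sequence `σ`. -/
noncomputable def telescopeMap : ∐ Y ⟶ ∐ Y :=
  Sigma.desc fun i => Sigma.ι Y i - σ i ≫ Sigma.ι Y (i + 1)

theorem ι_telescopeMap (i : ℕ) :
    Sigma.ι Y i ≫ telescopeMap σ = Sigma.ι Y i - σ i ≫ Sigma.ι Y (i + 1) :=
  Sigma.ι_desc _ _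

theorem telescopeMap_π_zero : telescopeMap σ ≫ Sigma.π Y 0 = Sigma.π Y 0 := by
  refine Sigma.hom_ext _ _ fun i => ?_
  rw [← Category.assoc, ι_telescopeMap, Preadditive.sub_comp, Category.assoc,
    Sigma.ι_π_of_ne _ (Nat.succ_ne_zero i), comp_zero, sub_zero]

theorem telescopeMap_π_succ (j : ℕ) :
    telescopeMap σ ≫ Sigma.π Y (j + 1) = Sigma.π Y (j + 1) - Sigma.π Y j ≫ σ j := by
  refine Sigma.hom_ext _ _ fun i => ?_
  rw [← Category.assoc, ι_telescopeMap, Preadditive.sub_comp, Preadditive.comp_sub,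
    Category.assoc]
  obtain rfl | hij := eq_or_ne i j
  · simp [Sigma.ι_π_of_ne _ (Nat.succ_ne_self i).symm]
  · simp [Sigma.ι_π_of_ne_assoc _ hij, Sigma.ι_π_of_ne _ (show i + 1 ≠ j + 1 by omega)]

theorem eq_zero_of_comp_telescopeMap_eq_zero {W : C}
    [PreservesColimit (Discrete.functor Y) (preadditiveCoyoneda.obj (Opposite.op W))]
    {x : W ⟶ ∐ Y} (hx : x ≫ telescopeMap σ = 0) : x = 0 := by
  have hπ (j : ℕ) : x ≫ Sigma.π Y j = 0 := by
    induction j with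
    | zero => rw [← telescopeMap_π_zero σ, ← Category.assoc, hx, zero_comp]
    | succ j ih =>
      have h := x ≫= telescopeMap_π_succ σ j
      rwa [← Category.assoc, hx, zero_comp, Preadditive.comp_sub, ← Category.assoc, ih,
        zero_comp, sub_zero, eq_comm] at h
  obtain ⟨s, hs⟩ := (Sigma.eventually_sum_π_ι_eq x).exists
  rw [← hs]
  simp [hπ]

theorem telescopeMap_comp_sigmaComparison {D : Type*} [Category D] [Preadditive D]
    (F : C ⥤ D) [F.Additive] [HasCoproduct fun i => F.obj (Y i)] :
    telescopeMap (fun i => F.map (σ i)) ≫ sigmaComparison F Y =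
      sigmaComparison F Y ≫ F.map (telescopeMap σ) := by
  refine Sigma.hom_ext _ _ fun i => ?_
  simp only [← Category.assoc, ι_comp_sigmaComparison, ι_telescopeMap]
  rw [← F.map_comp, ι_telescopeMap, Preadditive.sub_comp, Category.assoc, ι_comp_sigmaComparison,
    ι_comp_sigmaComparison, F.map_sub, F.map_comp]

variable {σ}

theorem ι_comp_eq_of_telescopeMap_comp_eq_zero {Z : C} {c : ∐ Y ⟶ Z}
    (hc : telescopeMap σ ≫ c = 0) (i : ℕ) : Sigma.ι Y i ≫ c = σ i ≫ Sigma.ι Y (i + 1) ≫ c := by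
  have h := Sigma.ι Y i ≫= hc
  rwa [← Category.assoc, ι_telescopeMap, comp_zero, Preadditive.sub_comp, sub_eq_zero,
    Category.assoc] at h

theorem exists_sum_comp_eq_comp_ι_comp {Z : C} {c : ∐ Y ⟶ Z} (hc : telescopeMap σ ≫ c = 0)
    {W : C} (g : ∀ i, W ⟶ Y i) (n : ℕ) :
    ∃ y : W ⟶ Y n, (∑ i ∈ Finset.range n, g i ≫ Sigma.ι Y i) ≫ c = y ≫ Sigma.ι Y n ≫ c := by
  induction n with
  | zero => exact ⟨0, by simp⟩
  | succ n ih =>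
    obtain ⟨y, hy⟩ := ih
    refine ⟨(y + g n) ≫ σ n, ?_⟩
    rw [Finset.sum_range_succ, Preadditive.add_comp, hy, Category.assoc, Category.assoc,
      ← Preadditive.add_comp, ι_comp_eq_of_telescopeMap_comp_eq_zero hc]

end Telescope

section Shift

variable {C : Type*} [Category C] [Preadditive C] [HasShift C ℤ]

def leftOrthShifts (Z : C) : Set C := {V | ∀ (k : ℤ) (f : V ⟶ Z⟦k⟧), f = 0}

theorem hom_eq_zero_of_mem_leftOrthShifts {V Z : C} (hV : V ∈ leftOrthShifts Z) (f : V ⟶ Z) :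
    f = 0 :=
  (cancel_mono ((shiftFunctorZero C ℤ).inv.app Z)).mp (by rw [zero_comp]; exact hV 0 _)

variable [∀ n : ℤ, (shiftFunctor C n).Additive]

theorem eq_zero_of_shift_map_comp_eq_zero {A B B' : C} (f : A ⟶ B) (a : ℤ) (e : B⟦a⟧ ⟶ B')
    [Mono e] (h : f⟦a⟧' ≫ e = 0) : f = 0 :=
  (shiftFunctor C a).map_injective (by rw [Functor.map_zero, ← cancel_mono e, h, zero_comp])

theorem mem_leftOrthShifts_of_shift {V Z : C} {n : ℤ} (hV : V⟦n⟧ ∈ leftOrthShifts Z) :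
    V ∈ leftOrthShifts Z := fun k f =>
  eq_zero_of_shift_map_comp_eq_zero f n ((shiftFunctorAdd' C k n (k + n) rfl).inv.app Z) (hV _ _)

end Shift

section Pretriangulated

variable {C : Type*} [Category C] [Preadditive C] [HasZeroObject C] [HasShift C ℤ]
  [∀ n : ℤ, (shiftFunctor C n).Additive] [Pretriangulated C] {Tr : Triangle C} {W : C}

theorem Triangle.eq_zero_of_comp_mor₁_surjective (hT : Tr ∈ distTriang C)
    (hsurj : Function.Surjective fun a : W ⟶ Tr.obj₁ => a ≫ Tr.mor₁)
    (hinj : ∀ x : W ⟶ Tr.obj₁⟦(1 : ℤ)⟧, x ≫ Tr.mor₁⟦(1 : ℤ)⟧' = 0 → x = 0)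
    (g : W ⟶ Tr.obj₃) : g = 0 := by
  obtain ⟨b, rfl⟩ := Triangle.coyoneda_exact₃ _ hT g
    (hinj _ (by rw [Category.assoc, comp_distTriang_mor_zero₃₁ _ hT, comp_zero]))
  obtain ⟨a, rfl⟩ := hsurj b
  rw [Category.assoc, comp_distTriang_mor_zero₁₂ _ hT, comp_zero]

theorem Triangle.comp_mor₁_bijective (hT : Tr ∈ distTriang C)
    (h₀ : ∀ g : W ⟶ Tr.obj₃, g = 0) (h₁ : ∀ g : W ⟶ Tr.obj₃⟦(-1 : ℤ)⟧, g = 0) :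
    Function.Bijective fun a : W ⟶ Tr.obj₁ => a ≫ Tr.mor₁ := by
  refine ⟨(injective_iff_map_eq_zero (Preadditive.rightComp W Tr.mor₁)).mpr fun a ha => ?_,
    fun b => ?_⟩
  · obtain ⟨u, rfl⟩ := Triangle.coyoneda_exact₂ _ (inv_rot_of_distTriang _ hT) a ha
    rw [show u = 0 from h₁ u]
    exact zero_comp
  · obtain ⟨a, ha⟩ := Triangle.coyoneda_exact₂ _ hT b (h₀ _)
    exact ⟨a, ha.symm⟩

theorem Triangle.mor₂_comp_bijective (hT : Tr ∈ distTriang C)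
    (h₀ : ∀ g : Tr.obj₁ ⟶ W, g = 0) (h₁ : ∀ g : Tr.obj₁⟦(1 : ℤ)⟧ ⟶ W, g = 0) :
    Function.Bijective fun b : Tr.obj₃ ⟶ W => Tr.mor₂ ≫ b := by
  refine ⟨(injective_iff_map_eq_zero (Preadditive.leftComp W Tr.mor₂)).mpr fun b hb => ?_,
    fun b => ?_⟩
  · obtain ⟨u, rfl⟩ := Triangle.yoneda_exact₃ _ hT b hb
    rw [h₁ u, comp_zero]
  · obtain ⟨a, ha⟩ := Triangle.yoneda_exact₂ _ hT b (h₀ _)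
    exact ⟨a, ha.symm⟩

end Pretriangulated

section Hocolim

variable {C : Type*} [Category C] [Preadditive C] [HasZeroObject C] [HasShift C ℤ]
  [∀ n : ℤ, (shiftFunctor C n).Additive] [Pretriangulated C]
  {Y : ℕ → C} [HasCoproduct Y] [HasCoproduct fun i => (Y i)⟦(1 : ℤ)⟧]
  {σ : ∀ i, Y i ⟶ Y (i + 1)} {Z : C} {c : ∐ Y ⟶ Z} {δ : Z ⟶ (∐ Y)⟦(1 : ℤ)⟧}

theorem exists_eq_comp_ι_comp_of_distTriang
    (hT : Triangle.mk (telescopeMap σ) c δ ∈ distTriang C)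
    {W : C} [PreservesColimitsOfShape (Discrete ℕ) (preadditiveCoyoneda.obj (Opposite.op W))]
    (f : W ⟶ Z) (j₀ : ℕ) : ∃ j ≥ j₀, ∃ y : W ⟶ Y j, f = y ≫ Sigma.ι Y j ≫ c := by
  -- Up to `Φ`, `(telescopeMap σ)⟦1⟧` is the telescope map of the shifted sequence.
  let Φ := sigmaComparison (shiftFunctor C (1 : ℤ)) Y
  have hΦ : inv Φ ≫ telescopeMap (fun i => (σ i)⟦(1 : ℤ)⟧') =
      (telescopeMap σ)⟦(1 : ℤ)⟧' ≫ inv Φ := by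
    rw [IsIso.inv_comp_eq, ← Category.assoc, ← telescopeMap_comp_sigmaComparison, Category.assoc,
      IsIso.hom_inv_id, Category.comp_id]
  have hδ : δ ≫ (telescopeMap σ)⟦(1 : ℤ)⟧' = 0 := comp_distTriang_mor_zero₃₁ _ hT
  have hfδ : f ≫ δ ≫ inv Φ = 0 := eq_zero_of_comp_telescopeMap_eq_zero _
    (by rw [Category.assoc, Category.assoc, hΦ, ← Category.assoc δ, hδ, zero_comp, comp_zero])
  obtain ⟨e, rfl⟩ : ∃ e : W ⟶ ∐ Y, f = e ≫ c := Triangle.coyoneda_exact₃ _ hT f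
    (by rwa [← Category.assoc, IsIso.comp_inv_eq, zero_comp] at hfδ)
  obtain ⟨n, hn, he⟩ := ((Filter.eventually_ge_atTop j₀).and
    (Filter.tendsto_finset_range.eventually (Sigma.eventually_sum_π_ι_eq e))).exists
  have hc : telescopeMap σ ≫ c = 0 := comp_distTriang_mor_zero₁₂ _ hT
  obtain ⟨y, hy⟩ := exists_sum_comp_eq_comp_ι_comp hc (fun i => e ≫ Sigma.π Y i) n
  exact ⟨n, hn, y, by rw [← hy, he]⟩

end Hocolim

variable {T}

section Aisle

variable {U : Set T}

theorem aisleGen_shift_one_s8 (hU : ∀ V ∈ U, V⟦(1 : ℤ)⟧ ∈ U) {V : T} (hV : aisleGen T U V) :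
    aisleGen T U (V⟦(1 : ℤ)⟧) := by
  induction hV with
  | of V hV => exact .of _ (hU V hV)
  | iso A B e _ ih => exact .iso _ _ ((shiftFunctor T (1 : ℤ)).mapIso e) ih
  | coprod Y _ ih =>
    exact .iso _ _ (asIso (sigmaComparison (shiftFunctor T (1 : ℤ)) Y)) (.coprod _ ih)
  | ext Tr hTr _ _ ih₁ ih₃ => exact .ext _ (Triangle.shift_distinguished Tr hTr 1) ih₁ ih₃

theorem aisleGen_shift_natCast (hU : ∀ V ∈ U, V⟦(1 : ℤ)⟧ ∈ U) {V : T} (hV : aisleGen T U V)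
    (k : ℕ) : aisleGen T U (V⟦(k : ℤ)⟧) := by
  induction k with
  | zero => exact .iso _ _ ((shiftFunctorZero T ℤ).symm.app V) hV
  | succ k ih =>
    exact .iso _ _ ((shiftFunctorAdd' T (k : ℤ) 1 (k + 1 : ℕ) (by push_cast; rfl)).symm.app V)
      (aisleGen_shift_one_s8 hU ih)

theorem TLe_mono (hU : ∀ V ∈ U, V⟦(1 : ℤ)⟧ ∈ U) {a b : ℤ} (hab : a ≤ b) :
    TLe T U a ⊆ TLe T U b := fun W hW => by
  obtain ⟨k, hk⟩ := Int.eq_ofNat_of_zero_le (sub_nonneg.mpr hab)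
  exact .iso _ _ ((shiftFunctorAdd' T a k b (by omega)).symm.app W)
    (aisleGen_shift_natCast hU hW k)

theorem shift_mem_TLe {n : ℤ} {W : T} (hW : W ∈ TLe T U n) (a : ℤ) : W⟦a⟧ ∈ TLe T U (n - a) :=
  .iso _ _ ((shiftFunctorAdd' T a (n - a) n (by omega)).app W) hW

theorem mem_TLe_zero {V : T} (hV : V ∈ U) : V ∈ TLe T U 0 :=
  .iso _ _ ((shiftFunctorZero T ℤ).symm.app V) (.of V hV)

theorem aisleGen_subset_leftOrthShifts {Z : T} (hU : U ⊆ leftOrthShifts Z) {V : T}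
    (hV : aisleGen T U V) : V ∈ leftOrthShifts Z := by
  induction hV with
  | of V hV => exact hU hV
  | iso A B e _ ih => exact fun k f => by simpa using e.inv ≫= ih k (e.hom ≫ f)
  | coprod Y _ ih => exact fun k f => Sigma.hom_ext _ _ fun i => by rw [comp_zero]; exact ih i k _
  | ext Tr hTr _ _ ih₁ ih₃ =>
    intro k f
    obtain ⟨g, rfl⟩ := Triangle.yoneda_exact₂ _ hTr f (ih₁ k _)
    rw [ih₃ k g, comp_zero]

theorem TLe_subset_leftOrthShifts {Z : T} (hU : U ⊆ leftOrthShifts Z) (n : ℤ) :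
    TLe T U n ⊆ leftOrthShifts Z := fun _ hW =>
  mem_leftOrthShifts_of_shift (aisleGen_subset_leftOrthShifts hU hW)

variable {n : ℤ}

theorem TruncTriangle.comp_ι_bijective (hU : ∀ V ∈ U, V⟦(1 : ℤ)⟧ ∈ U) {X : T}
    (t : TruncTriangle T U n X) {W : T} (hW : W ∈ TLe T U n) :
    Function.Bijective fun g : W ⟶ t.low => g ≫ t.ι :=
  Triangle.comp_mor₁_bijective t.dist (t.high_mem W hW) fun g =>
    eq_zero_of_shift_map_comp_eq_zero g 1
      ((shiftFunctorCompIsoId T (-1) 1 (by omega)).hom.app _)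
      (t.high_mem _ (TLe_mono hU (by omega) (shift_mem_TLe hW 1)) _)

theorem TruncTriangle.π_comp_bijective (hU : ∀ V ∈ U, V⟦(1 : ℤ)⟧ ∈ U) {X : T}
    (t : TruncTriangle T U n X) {Y : T} (hY : Y ∈ TGt T U n) :
    Function.Bijective fun g : t.high ⟶ Y => t.π ≫ g :=
  Triangle.mor₂_comp_bijective t.dist (hY _ t.low_mem)
    (hY _ (TLe_mono hU (by omega) (shift_mem_TLe t.low_mem 1)))

theorem TruncTriangle.isIso_of_comp_ι_eq (hU : ∀ V ∈ U, V⟦(1 : ℤ)⟧ ∈ U) {A B : T} {f : A ⟶ B}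
    (hf : ∀ W ∈ TLe T U n, Function.Bijective fun a : W ⟶ A => a ≫ f)
    (t : TruncTriangle T U n A) (t' : TruncTriangle T U n B) {g : t.low ⟶ t'.low}
    (hg : g ≫ t'.ι = t.ι ≫ f) : IsIso g := by
  have hbij : ∀ W ∈ TLe T U n, Function.Bijective fun a : W ⟶ t.low => a ≫ g := by
    intro W hW
    refine (Function.Bijective.of_comp_iff' (t'.comp_ι_bijective hU hW) _).mp ?_
    have hcomp : ((fun b => b ≫ t'.ι) ∘ fun a : W ⟶ t.low => a ≫ g) =
        (fun a => a ≫ f) ∘ fun a => a ≫ t.ι := by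
      funext a
      simp [hg]
    rw [hcomp]
    exact (hf W hW).comp (t.comp_ι_bijective hU hW)
  obtain ⟨g', hg'⟩ := (hbij _ t'.low_mem).2 (𝟙 _)
  exact ⟨g', (hbij _ t.low_mem).1 (by simp [hg']), hg'⟩

theorem TruncTriangle.isIso_of_π_comp_eq (hU : ∀ V ∈ U, V⟦(1 : ℤ)⟧ ∈ U) {A B : T}
    (s : TruncTriangle T U n A) (s' : TruncTriangle T U n B) (g : A ⟶ B) [IsIso g]
    {h : s.high ⟶ s'.high} (hh : s.π ≫ h = g ≫ s'.π) : IsIso h := by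
  obtain ⟨h', hh'⟩ := (s'.π_comp_bijective hU s.high_mem).2 (inv g ≫ s.π)
  refine ⟨h', (s.π_comp_bijective hU s.high_mem).1 ?_, (s'.π_comp_bijective hU s'.high_mem).1 ?_⟩
  · simp only [reassoc_of% hh, hh', IsIso.hom_inv_id_assoc, Category.comp_id]
  · simp only [reassoc_of% hh', hh, IsIso.inv_hom_id_assoc, Category.comp_id]

end Aisle

section Tower

variable {U : Set T} {X : T} {d : ∀ i : ℕ, TruncTriangle T U (i : ℤ) X}
  {σ : ∀ i : ℕ, (d i).low ⟶ (d (i + 1)).low} {HC : T} {c : (∐ fun i => (d i).low) ⟶ HC}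
  {δ : HC ⟶ (∐ fun i => (d i).low)⟦(1 : ℤ)⟧} {m : HC ⟶ X}

theorem comp_bijective_of_isCompactObj (hU : ∀ V ∈ U, V⟦(1 : ℤ)⟧ ∈ U)
    (hdist : Triangle.mk (telescopeMap σ) c δ ∈ distTriang T)
    (hm : c ≫ m = Sigma.desc fun i => (d i).ι) {W : T} (hW : IsCompactObj T W) {i : ℤ}
    (hWi : W ∈ TLe T U i) : Function.Bijective fun f : W ⟶ HC => f ≫ m := by
  have := hW.preservesColimitsOfShape ℕ
  have hιm (j : ℕ) : Sigma.ι _ j ≫ c ≫ m = (d j).ι := by rw [hm, Sigma.ι_desc]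
  have hWj {j : ℕ} (hj : i.toNat ≤ j) : W ∈ TLe T U j :=
    TLe_mono hU ((Int.self_le_toNat i).trans (by exact_mod_cast hj)) hWi
  refine ⟨(injective_iff_map_eq_zero (Preadditive.rightComp W m)).mpr
    fun f (hf : f ≫ m = 0) => ?_, fun h => ?_⟩
  · obtain ⟨j, hj, y, rfl⟩ := exists_eq_comp_ι_comp_of_distTriang hdist f i.toNat
    have hy : y ≫ (d j).ι = 0 ≫ (d j).ι := by
      rw [← hιm, zero_comp]
      simpa using hf
    rw [((d j).comp_ι_bijective hU (hWj hj)).1 hy, zero_comp]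
  · obtain ⟨y, rfl⟩ := ((d i.toNat).comp_ι_bijective hU (hWj le_rfl)).2 h
    exact ⟨y ≫ Sigma.ι (fun j => (d j).low) i.toNat ≫ c, by simp [hιm]⟩

theorem hom_eq_zero_of_isCompactObj (hU : ∀ V ∈ U, V⟦(1 : ℤ)⟧ ∈ U)
    (hdist : Triangle.mk (telescopeMap σ) c δ ∈ distTriang T)
    (hm : c ≫ m = Sigma.desc fun i => (d i).ι) {Z : T} {π : X ⟶ Z} {δ' : Z ⟶ HC⟦(1 : ℤ)⟧}
    (hT : Triangle.mk m π δ' ∈ distTriang T) {W : T} (hW : IsCompactObj T W) {i : ℤ}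
    (hWi : W ∈ TLe T U i) (g : W ⟶ Z) : g = 0 := by
  refine Triangle.eq_zero_of_comp_mor₁_surjective hT
    (comp_bijective_of_isCompactObj hU hdist hm hW hWi).2
    (fun (x : W ⟶ HC⟦(1 : ℤ)⟧) (hx : x ≫ m⟦(1 : ℤ)⟧' = 0) => ?_) g
  refine eq_zero_of_shift_map_comp_eq_zero x (-1)
    ((shiftFunctorCompIsoId T (1 : ℤ) (-1) (add_neg_cancel 1)).hom.app HC) ?_
  refine (comp_bijective_of_isCompactObj hU hdist hm (hW.shift (-1))
    (shift_mem_TLe hWi (-1))).1 ?_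
  have hnat := (shiftFunctorCompIsoId T (1 : ℤ) (-1) (add_neg_cancel 1)).hom.naturality m
  dsimp at hnat ⊢
  rw [Category.assoc, ← hnat, ← Category.assoc, ← Functor.map_comp, hx, Functor.map_zero,
    zero_comp, zero_comp]

theorem comp_bijective_of_mem_TLe (hU' : U ⊆ Compacts T) (hU : ∀ V ∈ U, V⟦(1 : ℤ)⟧ ∈ U)
    (hdist : Triangle.mk (telescopeMap σ) c δ ∈ distTriang T)
    (hm : c ≫ m = Sigma.desc fun i => (d i).ι) {n : ℤ} {W : T} (hW : W ∈ TLe T U n) :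
    Function.Bijective fun f : W ⟶ HC => f ≫ m := by
  obtain ⟨Z, π, δ', hT⟩ := distinguished_cocone_triangle m
  have hUZ : U ⊆ leftOrthShifts Z := fun V hV k f =>
    eq_zero_of_shift_map_comp_eq_zero f (-k)
      ((shiftFunctorCompIsoId T k (-k) (by omega)).hom.app Z)
      (hom_eq_zero_of_isCompactObj hU hdist hm hT ((hU' hV).shift (-k))
        (shift_mem_TLe (mem_TLe_zero hV) (-k)) _)
  have hWZ := TLe_subset_leftOrthShifts hUZ n hW
  exact Triangle.comp_mor₁_bijective hT (hom_eq_zero_of_mem_leftOrthShifts hWZ) (hWZ (-1))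

end Tower

variable (T)

theorem stmt8 (U : LeftAisle T (Compacts T))
    (X : T) (d : ∀ i : ℕ, TruncTriangle T U.carrier (i : ℤ) X)
    (σ : ∀ i : ℕ, (d i).low ⟶ (d (i + 1)).low)
    (HC : T) (c : (∐ fun i : ℕ => (d i).low) ⟶ HC)
    (δ : HC ⟶ (∐ fun i : ℕ => (d i).low)⟦(1 : ℤ)⟧)
    (hdist : Triangle.mk
      (Sigma.desc fun i : ℕ => Sigma.ι (fun j : ℕ => (d j).low) i -
        σ i ≫ Sigma.ι (fun j : ℕ => (d j).low) (i + 1)) c δ ∈ (distTriang T))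
    (m : HC ⟶ X) (hm : c ≫ m = Sigma.desc fun i : ℕ => (d i).ι)
    (n : ℤ) (dH : HomologyData T U.carrier n HC) (dX : HomologyData T U.carrier n X)
    (md : HomologyMapData T U.carrier n m dH dX) :
    IsIso md.h := by
  have hU : ∀ V ∈ U.carrier, V⟦(1 : ℤ)⟧ ∈ U.carrier := U.shift_mem
  have : IsIso md.g := TruncTriangle.isIso_of_comp_ι_eq hU
    (fun _ hW => comp_bijective_of_mem_TLe U.subset hU hdist hm hW) dH.t dX.t md.hg
  exact TruncTriangle.isIso_of_π_comp_eq hU dH.s dX.s md.g md.hh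

end CYPaper
end
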